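/- arXiv:1612.05447 — 5 statements merged into one kernel-verified Lean document; each statement's English description precedes it below -/
import Mathlib

section
/- Let C be the Reed-Solomon code over GF(q) of dimension k with evaluation set D = {x_1,...,x_n} ⊆ GF(q) of n distinct points, where 2 ≤ k and k+2 ≤ n ≤ q. Then the covering radius of C equals n−k. -/
open Polynomial Finset

/-- The covering radius of an [n,k] Reed–Solomon code over GF(q) with
evaluation set D = {x_1,…,x_n} ⊆ GF(q) (n distinct points, 2 ≤ k, k+2 ≤ n ≤ q)
equals n - k:  every word is within distance n-k of the code, and some word is at
distance at least n-k from every codeword. -/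
theorem stmt_2 {F : Type*} [Field F] [Fintype F] [DecidableEq F]
    (n k : ℕ) (hk : 2 ≤ k) (hn1 : k + 2 ≤ n) (hn2 : n ≤ Fintype.card F)
    (x : Fin n → F) (hx : Function.Injective x) :
    (∀ u : Fin n → F, ∃ f : Polynomial F, f.degree < (k : ℕ) ∧
        hammingDist u (fun i => f.eval (x i)) ≤ n - k) ∧
    (∃ u : Fin n → F, ∀ f : Polynomial F, f.degree < (k : ℕ) →
        n - k ≤ hammingDist u (fun i => f.eval (x i))) := by
  constructor
  · intro u
    have hkn : k ≤ n := by omega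
    set s : Finset (Fin n) := Finset.map (Fin.castLEEmb hkn) Finset.univ with hs
    have hcard : s.card = k := by simp [hs]
    refine ⟨Lagrange.interpolate s x u, ?_, ?_⟩
    · have hd := Lagrange.degree_interpolate_lt u hx.injOn (s := s)
      rwa [hcard] at hd
    · have hsub : ({i | u i ≠ (Lagrange.interpolate s x u).eval (x i)} : Finset (Fin n)) ⊆ sᶜ := by
        intro i hi
        simp only [mem_filter, mem_univ, true_and] at hi
        simp only [mem_compl]
        intro his
        exact hi (Lagrange.eval_interpolate_at_node u hx.injOn his).symm
      calc hammingDist u (fun i => (Lagrange.interpolate s x u).eval (x i))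
          ≤ sᶜ.card := Finset.card_le_card hsub
        _ = n - k := by rw [Finset.card_compl, hcard]; simp
  · refine ⟨fun i => (x i) ^ k, fun f hf => ?_⟩
    set g : F[X] := X ^ k - f with hg
    have hdX : (X ^ k : F[X]).degree = k := by simp
    have hgd : g.degree = k := by
      rw [hg, Polynomial.degree_sub_eq_left_of_degree_lt (by rw [hdX]; exact hf), hdX]
    have hg0 : g ≠ 0 := fun h => by simp [h] at hgd
    have hgnd : g.natDegree = k := Polynomial.natDegree_eq_of_degree_eq_some hgd
    set A : Finset (Fin n) := {i | (x i) ^ k = f.eval (x i)} with hA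
    have hAk : A.card ≤ k := by
      have himg : A.image x ⊆ g.roots.toFinset := by
        intro y hy
        simp only [Finset.mem_image, hA, mem_filter, mem_univ, true_and] at hy
        obtain ⟨i, hi, rfl⟩ := hy
        rw [Multiset.mem_toFinset, Polynomial.mem_roots hg0]
        simp [hg, Polynomial.IsRoot, sub_eq_zero, hi]
      calc A.card = (A.image x).card := (Finset.card_image_of_injective A hx).symm
        _ ≤ g.roots.toFinset.card := Finset.card_le_card himg
        _ ≤ Multiset.card g.roots := Multiset.toFinset_card_le _
        _ ≤ g.natDegree := Polynomial.card_roots' g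
        _ = k := hgnd
    have hsplit : A.card + hammingDist (fun i => (x i) ^ k) (fun i => f.eval (x i)) = n := by
      have := Finset.card_filter_add_card_filter_not
        (s := (Finset.univ : Finset (Fin n))) (p := fun i => (x i) ^ k = f.eval (x i))
      simpa [hA, hammingDist] using this
    omega
end

section
/- For a [n,k] Reed-Solomon code C with evaluation set D = {x_1,...,x_n} ⊆ GF(q), the word u = (x_1^k, ..., x_n^k) is at Hamming distance exactly n−k from C. -/
open Polynomial Finset

/-- For an [n,k] Reed–Solomon code with evaluation set
D = {x_1,…,x_n} ⊆ GF(q), the word u = (x_1^k, …, x_n^k) is at Hamming distance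
exactly n−k from the code. -/
theorem stmt_3 {F : Type*} [Field F] [Fintype F] [DecidableEq F]
    (n k : ℕ) (hk : 2 ≤ k) (hn : k + 2 ≤ n)
    (x : Fin n → F) (hx : Function.Injective x) :
    (∀ f : Polynomial F, f.degree < (k : ℕ) →
        n - k ≤ hammingDist (fun i => (x i) ^ k) (fun i => f.eval (x i))) ∧
    (∃ f : Polynomial F, f.degree < (k : ℕ) ∧
        hammingDist (fun i => (x i) ^ k) (fun i => f.eval (x i)) = n - k) := by
  have hkn : k < n := by omega
  have hcard : (Finset.univ.filter (fun i : Fin n => (i : ℕ) < k)).card = k := by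
    have : (Finset.univ.filter (fun i : Fin n => (i : ℕ) < k)) = Finset.Iio ⟨k, hkn⟩ := by
      ext i
      simp [Fin.lt_def]
    rw [this, Fin.card_Iio]
  constructor
  · intro f hf
    set g : Polynomial F := X ^ k - f with hg
    have hXd : (X ^ k : Polynomial F).degree = (k : ℕ) := by simp
    have hgd : g.degree = (k : ℕ) := by
      rw [hg, Polynomial.degree_sub_eq_left_of_degree_lt (by rwa [hXd]), hXd]
    have hg0 : g ≠ 0 := by
      intro h
      rw [h, Polynomial.degree_zero] at hgd
      exact (by simp : ((⊥ : WithBot ℕ) ≠ (k : ℕ))) hgd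
    have hnat : g.natDegree = k := Polynomial.natDegree_eq_of_degree_eq_some hgd
    set A := Finset.univ.filter (fun i : Fin n => (x i) ^ k = f.eval (x i)) with hA
    have hAcard : A.card ≤ k := by
      have himg : A.image x ⊆ g.roots.toFinset := by
        intro y hy
        obtain ⟨i, hi, rfl⟩ := Finset.mem_image.mp hy
        rw [Multiset.mem_toFinset, Polynomial.mem_roots hg0]
        have := (Finset.mem_filter.mp hi).2
        simp [hg, Polynomial.IsRoot, sub_eq_zero, this]
      calc A.card = (A.image x).card := (Finset.card_image_of_injective A hx).symm
        _ ≤ g.roots.toFinset.card := Finset.card_le_card himg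
        _ ≤ Multiset.card g.roots := Multiset.toFinset_card_le _
        _ ≤ g.natDegree := Polynomial.card_roots' g
        _ = k := hnat
    have hsplit := Finset.card_filter_add_card_filter_not
      (s := (Finset.univ : Finset (Fin n))) (p := fun i => (x i) ^ k = f.eval (x i))
    rw [Finset.card_univ, Fintype.card_fin, ← hA] at hsplit
    have hdd : hammingDist (fun i => (x i) ^ k) (fun i => f.eval (x i))
        = (Finset.univ.filter (fun i : Fin n => ¬ (x i) ^ k = f.eval (x i))).card := rfl
    rw [hdd]
    omega
  · set S := Finset.univ.filter (fun i : Fin n => (i : ℕ) < k) with hS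
    set p : Polynomial F := ∏ j ∈ S, (X - C (x j)) with hp
    have hpmonic : p.Monic := monic_prod_of_monic _ _ (fun j _ => monic_X_sub_C (x j))
    have hpdeg : p.natDegree = k := by
      rw [hp, Polynomial.natDegree_prod _ _ (fun j _ => X_sub_C_ne_zero (x j))]
      simp [hcard]
    refine ⟨X ^ k - p, ?_, ?_⟩
    · have h1 : ((X : Polynomial F) ^ k).degree = (k : ℕ) := by simp
      have h2 : p.degree = (k : ℕ) := by
        rw [Polynomial.degree_eq_natDegree hpmonic.ne_zero, hpdeg]
      apply lt_of_lt_of_le (Polynomial.degree_sub_lt (by rw [h1, h2]) (by simp)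
        (by simp [Polynomial.Monic.leadingCoeff hpmonic]))
      rw [h1]
    · have heval : ∀ i : Fin n, ((x i) ^ k = (X ^ k - p).eval (x i)) ↔ (i : ℕ) < k := by
        intro i
        rw [Polynomial.eval_sub, Polynomial.eval_pow, Polynomial.eval_X]
        constructor
        · intro h
          have hzero : p.eval (x i) = 0 := by
            exact sub_eq_self.mp h.symm
          rw [hp, Polynomial.eval_prod, Finset.prod_eq_zero_iff] at hzero
          obtain ⟨j, hj, hj2⟩ := hzero
          simp only [Polynomial.eval_sub, Polynomial.eval_X, Polynomial.eval_C,
            sub_eq_zero] at hj2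
          have : i = j := hx hj2
          subst this
          exact (Finset.mem_filter.mp hj).2
        · intro h
          have : p.eval (x i) = 0 := by
            rw [hp, Polynomial.eval_prod]
            exact Finset.prod_eq_zero (Finset.mem_filter.mpr ⟨Finset.mem_univ i, h⟩)
              (by simp)
          rw [this, sub_zero]
      have hd : hammingDist (fun i => (x i) ^ k) (fun i => (X ^ k - p).eval (x i))
          = (Finset.univ.filter (fun i : Fin n => ¬ ((x i) ^ k = (X ^ k - p).eval (x i)))).card := rfl
      have hfe : (Finset.univ.filter (fun i : Fin n => ¬ ((x i) ^ k = (X ^ k - p).eval (x i))))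
          = (Finset.univ.filter (fun i : Fin n => ¬ (i : ℕ) < k)) := by
        apply Finset.filter_congr
        intro i _
        exact not_congr (heval i)
      have hsplit := Finset.card_filter_add_card_filter_not
        (s := (Finset.univ : Finset (Fin n))) (p := fun i : Fin n => (i : ℕ) < k)
      rw [Finset.card_univ, Fintype.card_fin, ← hS] at hsplit
      rw [hd, hfe]
      omega
end

section
/- Let C be a [n,k] Reed-Solomon code over GF(q) with parity check matrix H (so C^⊥ is GRS of dimension n−k), and suppose the covering radius of C is n−k. Then a received word u ∈ GF(q)^n is a deep hole of C (i.e., at distance n−k from C) if and only if the augmented matrix [H | Hu] generates an [n+1, n−k] MDS code. -/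
/-! A vector `(w, t)` lies in the kernel of `[H | Hu]` iff `H (w + t u) = 0`. For `t ≠ 0` this
says that `u + t⁻¹ w` is a codeword at distance `wt w` from `u`; for `t = 0` it says that `w` is a
codeword, and a nonzero codeword of the Reed–Solomon code has fewer than `k` zeros, so weight
greater than `r`. Hence `u` is at distance at least `r` from the code iff every nonzero kernel
vector of `[H | Hu]` has weight greater than `r`, which is the MDS property: some `r` columns are
dependent iff a nonzero kernel vector is supported on them. -/

open Finset Polynomial Matrix

theorem card_lt_hammingNorm_add_of_degree_lt {F ι : Type*} [Field F] [Fintype ι] [DecidableEq F]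
    {x : ι → F} (hx : Function.Injective x) {f : F[X]} {k : ℕ} (hf : f.degree < k)
    (hne : (fun i => f.eval (x i)) ≠ 0) :
    Fintype.card ι < hammingNorm (fun i => f.eval (x i)) + k := by
  by_contra! hle
  have hf0 : f ≠ 0 := by rintro rfl; exact hne (funext fun _ => eval_zero)
  have hzeros : k ≤ #{i | f.eval (x i) = 0} := by
    have := card_filter_add_card_filter_not (s := univ) (p := fun i => f.eval (x i) = 0)
    rw [card_univ] at this
    simp only [hammingNorm, ne_eq] at hle
    omega
  refine hf0 (eq_zero_of_natDegree_lt_card_of_eval_eq_zero f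
    (f := fun i : {i // f.eval (x i) = 0} => x i) (hx.comp Subtype.val_injective)
    (fun i => i.2) ?_)
  rw [Fintype.card_subtype]
  exact ((natDegree_lt_iff_degree_lt hf0).mpr hf).trans_le hzeros

theorem Matrix.submatrix_id_mulVec_comp {R m ι κ : Type*} [CommSemiring R] [Fintype ι] [Fintype κ]
    (A : Matrix m ι R) {s : κ → ι} (hs : Function.Injective s) {v : ι → R}
    (hv : ∀ i ∉ Set.range s, v i = 0) :
    A.submatrix id s *ᵥ (v ∘ s) = A *ᵥ v := by
  ext i
  exact Fintype.sum_of_injective s hs _ _ (fun j hj => by simp [hv j hj]) fun _ => rfl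

theorem hammingNorm_snoc {β : Type*} [Zero β] [DecidableEq β] {n : ℕ} (w : Fin n → β) (t : β) :
    hammingNorm (Fin.snoc w t : Fin (n + 1) → β) = hammingNorm w + if t = 0 then 0 else 1 := by
  simp [hammingNorm, card_filter, Fin.sum_univ_castSucc]

def Matrix.augment {m F : Type*} {n : ℕ} (H : Matrix m (Fin n) F) (b : m → F) :
    Matrix m (Fin (n + 1)) F :=
  Matrix.of fun i j => if h : (j : ℕ) < n then H i ⟨j, h⟩ else b i

theorem Matrix.augment_mulVec_snoc {m F : Type*} [CommSemiring F] {n : ℕ}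
    (H : Matrix m (Fin n) F) (b : m → F) (w : Fin n → F) (t : F) :
    H.augment b *ᵥ Fin.snoc w t = H *ᵥ w + t • b := by
  ext i
  simp [augment, mulVec, dotProduct, Fin.sum_univ_castSucc, mul_comm]

theorem forall_det_submatrix_ne_zero_iff_lt_hammingNorm {F ι : Type*} [Field F] [Fintype ι]
    [DecidableEq F] {r : ℕ} (A : Matrix (Fin r) ι F) (hr : r ≤ Fintype.card ι) :
    (∀ s : Fin r → ι, Function.Injective s → (A.submatrix id s).det ≠ 0) ↔
      ∀ v, v ≠ 0 → A *ᵥ v = 0 → r < hammingNorm v := by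
  classical
  constructor
  · intro hdet v hv0 hAv
    by_contra! hv
    obtain ⟨T, hsupp, -, hT⟩ := exists_subsuperset_card_eq (subset_univ {i | v i ≠ 0}) hv
      (by rwa [card_univ])
    let e : T ≃ Fin r := Fintype.equivFinOfCardEq (by rwa [Fintype.card_coe])
    let s : Fin r → ι := fun j => e.symm j
    have hs : Function.Injective s := Subtype.val_injective.comp e.symm.injective
    have hvs : ∀ i ∉ Set.range s, v i = 0 := by
      intro i hi
      by_contra hvi
      exact hi ⟨e ⟨i, hsupp (by simpa using hvi)⟩, by simp [s]⟩
    refine hdet s hs (exists_mulVec_eq_zero_iff.mp ⟨v ∘ s, fun hvs0 => hv0 ?_, ?_⟩)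
    · funext i
      by_cases hi : i ∈ Set.range s
      · obtain ⟨j, rfl⟩ := hi
        exact congrFun hvs0 j
      · exact hvs i hi
    · rw [A.submatrix_id_mulVec_comp hs hvs, hAv]
  · intro hmin s hs hdet
    obtain ⟨c, hc0, hAc⟩ := exists_mulVec_eq_zero_iff.mpr hdet
    let v : ι → F := Function.extend s c 0
    have hvs : ∀ i ∉ Set.range s, v i = 0 := fun i hi => Function.extend_apply' _ _ _ hi
    have hcv : v ∘ s = c := funext (hs.extend_apply c 0)
    have hlt := hmin v (fun hv => hc0 (by rw [← hcv, hv]; rfl))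
      (by rw [← A.submatrix_id_mulVec_comp hs hvs, hcv, hAc])
    have hle : hammingNorm v ≤ r := by
      calc hammingNorm v ≤ #(univ.image s) := card_le_card fun i hi => by
            by_contra hni
            exact (mem_filter.mp hi).2 (hvs i (by simpa using hni))
        _ ≤ r := card_image_le.trans_eq (card_fin r)
    omega

theorem forall_le_hammingDist_iff_augment {F m : Type*} [Field F] [DecidableEq F] {n d : ℕ}
    {H : Matrix m (Fin n) F} (hH : ∀ w, w ≠ 0 → H *ᵥ w = 0 → d < hammingNorm w)
    (u : Fin n → F) :
    (∀ c, H *ᵥ c = 0 → d ≤ hammingDist u c) ↔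
      ∀ v, v ≠ 0 → H.augment (H *ᵥ u) *ᵥ v = 0 → d < hammingNorm v := by
  constructor
  · intro hdeep v hv0 hAv
    obtain ⟨w, t, rfl⟩ : ∃ w t, v = Fin.snoc w t :=
      ⟨Fin.init v, v (Fin.last n), (Fin.snoc_init_self v).symm⟩
    rw [augment_mulVec_snoc] at hAv
    rw [hammingNorm_snoc]
    by_cases ht : t = 0
    · subst ht
      have hw0 : w ≠ 0 := by
        rintro rfl
        exact hv0 (funext fun i => Fin.lastCases (by simp) (fun j => by simp) i)
      simpa using hH w hw0 (by simpa using hAv)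
    · have hc : H *ᵥ (u + t⁻¹ • w) = 0 := calc
        H *ᵥ (u + t⁻¹ • w) = t⁻¹ • (H *ᵥ w + t • H *ᵥ u) := by
          rw [mulVec_add, mulVec_smul, smul_add, smul_smul, inv_mul_cancel₀ ht, one_smul,
            add_comm]
        _ = 0 := by rw [hAv, smul_zero]
      have hdist := hdeep _ hc
      rw [hammingDist_eq_hammingNorm, neg_add_cancel_left,
        hammingNorm_smul fun _ => IsSMulRegular.of_ne_zero (inv_ne_zero ht)] at hdist
      rw [if_neg ht]
      omega
  · intro hmin c hc
    have hlt := hmin (Fin.snoc (c - u) (1 : F))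
      (fun h => (one_ne_zero (α := F)) (by simpa using congrFun h (Fin.last n)))
      (by rw [augment_mulVec_snoc, one_smul, ← mulVec_add, sub_add_cancel, hc])
    rw [hammingNorm_snoc, if_neg one_ne_zero, sub_eq_neg_add,
      ← hammingDist_eq_hammingNorm] at hlt
    omega

theorem stmt_5_general {F : Type*} [Field F] [DecidableEq F]
    (n k r : ℕ) (hn : n = k + r)
    (x : Fin n → F) (hx : Function.Injective x)
    (H : Matrix (Fin r) (Fin n) F)
    (hH : ∀ v : Fin n → F,
      (∃ f : Polynomial F, f.degree < (k : ℕ) ∧ v = fun i => f.eval (x i)) ↔ H.mulVec v = 0)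
    (u : Fin n → F) :
    let A : Matrix (Fin r) (Fin (n + 1)) F :=
      Matrix.of fun i j => if h : (j : ℕ) < n then H i ⟨j, h⟩ else H.mulVec u i
    -- u is a deep hole ↔ [H | Hu] is MDS
    ((∀ f : Polynomial F, f.degree < (k : ℕ) →
        r ≤ hammingDist u (fun i => f.eval (x i))) ↔
      (∀ s : Fin r → Fin (n + 1), Function.Injective s →
        (A.submatrix id s).det ≠ 0)) := by
  have hmin : ∀ w, w ≠ 0 → H *ᵥ w = 0 → r < hammingNorm w := by
    intro w hw0 hHw
    obtain ⟨f, hf, rfl⟩ := (hH w).mpr hHw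
    have := card_lt_hammingNorm_add_of_degree_lt hx hf hw0
    rw [Fintype.card_fin] at this
    omega
  have hcode : (∀ f : F[X], f.degree < k → r ≤ hammingDist u (fun i => f.eval (x i))) ↔
      ∀ c, H *ᵥ c = 0 → r ≤ hammingDist u c :=
    ⟨fun hdeep c hc => by
      obtain ⟨f, hf, rfl⟩ := (hH c).mpr hc
      exact hdeep f hf,
     fun hdeep f hf => hdeep _ ((hH _).mp ⟨f, hf, rfl⟩)⟩
  have hcols : r ≤ Fintype.card (Fin (n + 1)) := by rw [Fintype.card_fin]; omega
  exact hcode.trans ((forall_le_hammingDist_iff_augment hmin u).trans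
    (forall_det_submatrix_ne_zero_iff_lt_hammingNorm (H.augment (H *ᵥ u)) hcols).symm)

/-- Let C be an [n,k] Reed–Solomon code over GF(q) with parity check
matrix H (r = n − k rows), and suppose the covering radius of C is r = n − k.
Then a received word u is a deep hole of C (at distance n−k from C) if and only if
the augmented matrix [H | Hu] generates an [n+1, n−k] MDS code (every (n−k)×(n−k)
minor is nonzero). -/
theorem stmt_5 {F : Type*} [Field F] [Fintype F] [DecidableEq F]
    (n k r : ℕ) (hn : n = k + r) (hk : 2 ≤ k) (hr : 2 ≤ r) (hnq : n ≤ Fintype.card F)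
    (x : Fin n → F) (hx : Function.Injective x)
    (H : Matrix (Fin r) (Fin n) F)
    (hH : ∀ v : Fin n → F,
      (∃ f : Polynomial F, f.degree < (k : ℕ) ∧ v = fun i => f.eval (x i)) ↔ H.mulVec v = 0)
    -- the covering radius of C equals r = n − k :
    (hcov1 : ∀ w : Fin n → F, ∃ f : Polynomial F, f.degree < (k : ℕ) ∧
        hammingDist w (fun i => f.eval (x i)) ≤ r)
    (hcov2 : ∃ w : Fin n → F, ∀ f : Polynomial F, f.degree < (k : ℕ) →
        r ≤ hammingDist w (fun i => f.eval (x i)))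
    (u : Fin n → F) :
    let A : Matrix (Fin r) (Fin (n + 1)) F :=
      Matrix.of fun i j => if h : (j : ℕ) < n then H i ⟨j, h⟩ else H.mulVec u i
    -- u is a deep hole ↔ [H | Hu] is MDS
    ((∀ f : Polynomial F, f.degree < (k : ℕ) →
        r ≤ hammingDist u (fun i => f.eval (x i))) ↔
      (∀ s : Fin r → Fin (n + 1), Function.Injective s →
        (A.submatrix id s).det ≠ 0)) :=
  stmt_5_general n k r hn x hx H hH u
end

section
/- Let D = {x_1,...,x_n} ⊆ GF(q), define s_0,...,s_n by ∏_{i=1}^n (X − x_i) = Σ_j s_j X^{n−j}, and ν_j = ∏_{i≠j}(x_j − x_i)^{−1}. For u ∈ GF(q)^n, the interpolation polynomial u(X) through (x_i, u_i) satisfies u(X) = [X^{n−1},...,X,1] · L_n · V · u, where L_n is the n×n lower triangular matrix with (L_n)_{ij} = s_{i−j} and V is the matrix with j-th column ν_j·(1, x_j, ..., x_j^{n−1})^T. -/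
open Polynomial Finset in
lemma key_lem_stmt8 {F : Type*} [Field F] (n : ℕ) (x : Fin n → F) (j : Fin n) :
    ∏ i ∈ Finset.univ.erase j, (X - C (x i)) =
    ∑ i : Fin n, C (∑ k : Fin n, (if (k:ℕ) ≤ (i:ℕ) then
        (∏ t, (X - C (x t))).coeff (n - ((i:ℕ)-(k:ℕ))) * x j ^ (k:ℕ) else 0)) *
      X ^ (n - 1 - (i:ℕ)) := by
  set P := ∏ t, (X - C (x t)) with hP
  have hdeg : P.natDegree = n := by
    rw [hP, natDegree_prod]
    · simp
    · intro i _; exact X_sub_C_ne_zero _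
  have hfac : P = (X - C (x j)) * ∏ i ∈ Finset.univ.erase j, (X - C (x i)) :=
    (Finset.mul_prod_erase _ _ (mem_univ j)).symm
  have hQ : ∏ i ∈ Finset.univ.erase j, (X - C (x i)) = P /ₘ (X - C (x j)) := by
    rw [hfac, mul_divByMonic_cancel_left _ (monic_X_sub_C _)]
  rw [hQ]
  ext m
  rw [coeff_divByMonic_X_sub_C, hdeg, finset_sum_coeff]
  simp_rw [coeff_C_mul, coeff_X_pow]
  by_cases hm : m < n
  · have hi0 : n - 1 - m < n := by omega
    rw [Fintype.sum_eq_single (⟨n - 1 - m, hi0⟩ : Fin n)]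
    · simp only [mul_ite, mul_one, mul_zero, Fin.val_mk]
      rw [if_pos (by omega)]
      rw [Fin.sum_univ_eq_sum_range
        (fun k => if k ≤ (n-1-m) then P.coeff (n - ((n-1-m) - k)) * x j ^ k else 0)]
      have h1 : ∀ k ∈ range n, (if k ≤ n-1-m then P.coeff (n-(n-1-m-k)) * x j ^ k else 0)
          = if k ∈ range (n-m) then P.coeff (m+1+k) * x j ^ k else 0 := by
        intro k hk; simp only [mem_range] at *
        by_cases h : k ≤ n-1-m
        · rw [if_pos h, if_pos (by omega)]; congr 3; omega
        · rw [if_neg h, if_neg (by omega)]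
      rw [Finset.sum_congr rfl h1, Finset.sum_ite_mem,
        Finset.inter_eq_right.mpr (Finset.range_subset_range.mpr (by omega)),
        ← Finset.Ico_add_one_right_eq_Icc, Finset.sum_Ico_eq_sum_range]
      have hnm : n + 1 - (m+1) = n - m := by omega
      rw [hnm]
      apply Finset.sum_congr rfl
      intro k hk
      have hh : m + 1 + k - (m+1) = k := by omega
      rw [hh, mul_comm]
    · intro b hb
      rw [if_neg, mul_zero]
      intro h
      apply hb
      have hb1 : (b:ℕ) < n := b.isLt
      ext; simp; omega
  · rw [Finset.Icc_eq_empty (by omega), Finset.sum_empty]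
    symm; apply Finset.sum_eq_zero
    intro i _
    have := i.isLt
    rw [if_neg (by omega), mul_zero]

/-- With D = {x_1,…,x_n} ⊆ GF(q), s_0,…,s_n the coefficients of
∏ (X − x_i) (s_j = coefficient of X^{n−j}) and ν_j = ∏_{i≠j}(x_j − x_i)⁻¹, the
interpolation polynomial u(X) through (x_i, u_i) satisfies
u(X) = [X^{n−1},…,X,1] · L_n · V · u, where (L_n)_{ij} = s_{i−j} (lower triangular)
and V has j-th column ν_j·(1, x_j, …, x_j^{n−1})ᵀ. -/
theorem stmt_8 {F : Type*} [Field F] [Fintype F] [DecidableEq F] (n : ℕ)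
    (x : Fin n → F) (hx : Function.Injective x) (u : Fin n → F) :
    let s : ℕ → F := fun m => (∏ i, (Polynomial.X - Polynomial.C (x i))).coeff (n - m)
    let ν : Fin n → F := fun j => ∏ i ∈ Finset.univ.erase j, (x j - x i)⁻¹
    let L : Matrix (Fin n) (Fin n) F :=
      Matrix.of fun i j => if (j : ℕ) ≤ (i : ℕ) then s ((i : ℕ) - (j : ℕ)) else 0
    let V : Matrix (Fin n) (Fin n) F := Matrix.of fun i j => ν j * (x j) ^ (i : ℕ)
    Lagrange.interpolate Finset.univ x u =
      ∑ i : Fin n, Polynomial.C (((L * V).mulVec u) i) *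
        Polynomial.X ^ (n - 1 - (i : ℕ)) := by
  intro s ν L V
  open Polynomial Finset in
  have hrhs : ∀ i : Fin n, ((L * V).mulVec u) i
      = ∑ j, (u j * ν j) * ∑ k : Fin n, (if (k:ℕ) ≤ (i:ℕ) then
          (∏ t, (X - C (x t))).coeff (n - ((i:ℕ)-(k:ℕ))) * x j ^ (k:ℕ) else 0) := by
    intro i
    simp only [Matrix.mulVec, Matrix.mul_apply, dotProduct, Matrix.of_apply, L, V, s]
    apply Finset.sum_congr rfl; intro j _
    rw [Finset.sum_mul, Finset.mul_sum]
    apply Finset.sum_congr rfl; intro k _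
    by_cases h : (k:ℕ) ≤ (i:ℕ)
    · rw [if_pos h, if_pos h]; ring
    · rw [if_neg h, if_neg h]; ring
  open Polynomial Finset in
  have hbasis : ∀ j, Lagrange.basis Finset.univ x j
      = C (ν j) * ∏ i ∈ Finset.univ.erase j, (X - C (x i)) := by
    intro j
    rw [Lagrange.basis]
    simp_rw [Lagrange.basisDivisor]
    rw [Finset.prod_mul_distrib, ← map_prod]
  rw [Lagrange.interpolate_apply]
  simp_rw [hrhs, map_sum, Finset.sum_mul]
  rw [Finset.sum_comm]
  apply Finset.sum_congr rfl; intro j _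
  rw [hbasis, key_lem_stmt8, Finset.mul_sum, Finset.mul_sum]
  apply Finset.sum_congr rfl; intro i _
  simp only [Polynomial.C_mul]; ring
end

section
/- Let q be even and C the [q+1, q−2] Reed-Solomon code with evaluation set PG(1,q). The covering radius of C is 3, and every deep hole u of C has projective syndrome [S(u)] = (0:1:0), the nucleus of the standard conic in PG(2,q). Hence there is exactly one equivalence class of deep holes (u ~ v iff v − a·u ∈ C for some a ≠ 0). -/
/-!
The code is the kernel of the matrix `H` whose columns are the points `(1 : t : t²)` and
`(0 : 0 : 1)` of the conic `Y² = XZ`, because over a field of order `q` the power sums `∑ₜ tᵏ`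
with `k < 2(q - 1)` vanish except `∑ₜ t^(q-1) = -1`. So `u` lies within distance `w` of the
code exactly when its syndrome `H u` is a combination of `w` columns of `H`.
In characteristic 2 every vector is a combination of three columns, while the combinations of
two columns (the points on the secants and tangents of the conic) are exactly the vectors that
are not nonzero multiples of the nucleus `(0, 1, 0)`. So the deep holes are the words whose
syndrome is a nonzero multiple of the nucleus, and any two of them are proportional modulo
the code.
-/

open Finset Polynomial Matrix

namespace FiniteField

variable {K : Type*} [Field K] [Fintype K]

theorem sum_pow_card_sub_one : ∑ x : K, x ^ (Fintype.card K - 1) = -1 := by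
  classical
  have hq : 1 < Fintype.card K := Fintype.one_lt_card
  rw [← add_sum_erase _ _ (mem_univ 0), zero_pow (by omega), zero_add,
    sum_congr rfl fun x hx => pow_card_sub_one_eq_one x (ne_of_mem_erase hx), sum_const,
    card_erase_of_mem (mem_univ 0), card_univ, nsmul_one, Nat.cast_pred (by omega),
    cast_card_eq_zero, zero_sub]

theorem sum_pow_of_lt {k : ℕ} (hk : k < 2 * (Fintype.card K - 1)) :
    ∑ x : K, x ^ k = if k = Fintype.card K - 1 then -1 else 0 := by
  set q := Fintype.card K
  split_ifs with h
  · rw [h, sum_pow_card_sub_one]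
  obtain hlt | hgt := Nat.lt_or_gt_of_ne h
  · exact sum_pow_lt_card_sub_one K k hlt
  have hx (x : K) : x ^ k = x ^ (k - (q - 1)) := by
    rcases eq_or_ne x 0 with rfl | hx
    · rw [zero_pow (by omega), zero_pow (by omega)]
    · rw [← Nat.add_sub_cancel' hgt.le, pow_add, pow_card_sub_one_eq_one x hx, one_mul,
        Nat.add_sub_cancel_left]
  simp_rw [hx]
  exact sum_pow_lt_card_sub_one K _ (by omega)

theorem sum_pow_mul_eval {f : K[X]} (hf : f.natDegree < Fintype.card K) {i : ℕ}
    (hi : i + 1 < Fintype.card K) :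
    ∑ t : K, t ^ i * f.eval t = -f.coeff (Fintype.card K - 1 - i) := by
  set q := Fintype.card K
  calc ∑ t : K, t ^ i * f.eval t
      = ∑ k ∈ range q, f.coeff k * ∑ t : K, t ^ (i + k) := by
        simp_rw [eval_eq_sum_range' hf, mul_sum, pow_add]
        rw [sum_comm]
        exact sum_congr rfl fun k _ => sum_congr rfl fun t _ => by ring
    _ = ∑ k ∈ range q, if k = q - 1 - i then -f.coeff k else 0 := by
        refine sum_congr rfl fun k hk => ?_
        rw [mem_range] at hk
        rw [sum_pow_of_lt (by omega)]
        by_cases hki : k = q - 1 - i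
        · rw [if_pos (by omega), if_pos hki, mul_neg_one]
        · rw [if_neg (by omega), if_neg hki, mul_zero]
    _ = -f.coeff (q - 1 - i) := by
        rw [sum_ite_eq', if_pos (mem_range.2 (by omega))]

end FiniteField

section Hamming
variable {ι : Type*} [Fintype ι] [DecidableEq ι] {M : Type*} [AddCommMonoid M] [DecidableEq M]

theorem hammingNorm_add_le (x y : ι → M) :
    hammingNorm (x + y) ≤ hammingNorm x + hammingNorm y := by
  refine (card_le_card fun i hi => ?_).trans (card_union_le _ _)
  simp only [mem_filter, mem_univ, true_and, mem_union, Pi.add_apply] at hi ⊢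
  by_contra! h
  simp [h.1, h.2] at hi

theorem hammingNorm_single_le (i : ι) (a : M) : hammingNorm (Pi.single i a : ι → M) ≤ 1 := by
  refine (card_le_card fun j hj => ?_).trans (card_singleton i).le
  simp only [mem_filter, mem_univ, true_and, Pi.single_apply, ne_eq, ite_eq_right_iff,
    not_forall] at hj
  exact mem_singleton.2 hj.1

theorem exists_eq_single_add_single_of_hammingNorm_le_two [Nonempty ι] {x : ι → M}
    (hx : hammingNorm x ≤ 2) : ∃ i j a b, x = Pi.single i a + Pi.single j b := by
  have hsum : ∑ i ∈ {i | x i ≠ 0}, Pi.single i (x i) = x := by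
    rw [sum_filter_of_ne fun i _ h => by contrapose! h; rw [h, Pi.single_zero], univ_sum_single]
  obtain ⟨i₀⟩ := ‹Nonempty ι›
  interval_cases h : hammingNorm x
  · exact ⟨i₀, i₀, 0, 0, by simpa using h⟩
  · obtain ⟨i, hi⟩ := card_eq_one.1 h
    rw [hi, sum_singleton] at hsum
    exact ⟨i, i, x i, 0, by rw [Pi.single_zero, add_zero, hsum]⟩
  · obtain ⟨i, j, hij, hs⟩ := card_eq_two.1 h
    rw [hs, sum_pair hij] at hsum
    exact ⟨i, j, x i, x j, hsum.symm⟩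

theorem hammingNorm_single_add_single_le (i j : ι) (a b : M) :
    hammingNorm (Pi.single i a + Pi.single j b : ι → M) ≤ 2 :=
  (hammingNorm_add_le _ _).trans
    (add_le_add (hammingNorm_single_le i a) (hammingNorm_single_le j b))

end Hamming

theorem exists_hammingDist_le_iff_exists_mulVec_eq {R ι κ : Type*} [Ring R] [DecidableEq R]
    [Fintype ι] (H : Matrix κ ι R) (u : ι → R) (w : ℕ) :
    (∃ c, H *ᵥ c = 0 ∧ hammingDist u c ≤ w) ↔ ∃ e, H *ᵥ e = H *ᵥ u ∧ hammingNorm e ≤ w := by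
  have hdist (c : ι → R) : hammingDist u c = hammingNorm (u - c) := by
    rw [hammingDist_comm, hammingDist_eq_hammingNorm, neg_add_eq_sub]
  constructor
  · rintro ⟨c, hc, hd⟩
    exact ⟨u - c, by rw [mulVec_sub, hc, sub_zero], hdist c ▸ hd⟩
  · rintro ⟨e, he, hn⟩
    exact ⟨u - e, by rw [mulVec_sub, he, sub_self], by rwa [hdist, sub_sub_cancel]⟩

namespace DoublyExtendedRS

variable (F : Type*) [Field F] [Fintype F]

def code : Set (Option F → F) :=
  {v | ∃ f : F[X], f.degree < (Fintype.card F - 2 : ℕ) ∧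
    v = fun o => o.elim (f.coeff (Fintype.card F - 3)) (fun t => f.eval t)}

def checkMatrix : Matrix (Fin 3) (Option F) F :=
  Matrix.of fun i o => o.elim (if (i : ℕ) = 2 then (1 : F) else 0) (fun t => t ^ (i : ℕ))

variable {F}

theorem checkMatrix_mulVec (v : Option F → F) :
    checkMatrix F *ᵥ v =
      ![∑ t, v (some t), ∑ t, t * v (some t), v none + ∑ t, t ^ 2 * v (some t)] := by
  ext i
  fin_cases i <;> simp [checkMatrix, mulVec, dotProduct, Fintype.sum_option]

theorem checkMatrix_mulVec_elim (hq : 4 ≤ Fintype.card F) {f : F[X]}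
    (hf : f.natDegree < Fintype.card F) (c : F) :
    checkMatrix F *ᵥ (fun o => o.elim c f.eval) = ![-f.coeff (Fintype.card F - 1),
      -f.coeff (Fintype.card F - 2), c - f.coeff (Fintype.card F - 3)] := by
  have h0 := FiniteField.sum_pow_mul_eval hf (i := 0) (by omega)
  have h1 := FiniteField.sum_pow_mul_eval hf (i := 1) (by omega)
  have h2 := FiniteField.sum_pow_mul_eval hf (i := 2) (by omega)
  simp only [pow_zero, one_mul, pow_one, Nat.sub_zero, Nat.sub_sub] at h0 h1 h2
  rw [checkMatrix_mulVec]
  simp only [Option.elim]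
  rw [h0, h1, h2, ← sub_eq_add_neg]

theorem mem_code_iff (hq : 4 ≤ Fintype.card F) (v : Option F → F) :
    v ∈ code F ↔ checkMatrix F *ᵥ v = 0 := by
  set q := Fintype.card F
  have hnat {f : F[X]} (hf : f.degree < q) : f.natDegree < q := by
    rcases eq_or_ne f 0 with rfl | hf0
    · rw [natDegree_zero]; omega
    · exact (natDegree_lt_iff_degree_lt hf0).2 hf
  constructor
  · rintro ⟨f, hf, rfl⟩
    have hc {m : ℕ} (hm : q - 2 ≤ m) : f.coeff m = 0 :=
      coeff_eq_zero_of_degree_lt (hf.trans_le (by exact_mod_cast hm))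
    rw [checkMatrix_mulVec_elim hq (hnat (hf.trans_le (by exact_mod_cast Nat.sub_le q 2))),
      hc (by omega), hc le_rfl, sub_self, neg_zero]
    ext i; fin_cases i <;> rfl
  · intro hv
    classical
    set f := Lagrange.interpolate univ id (fun t => v (some t))
    have hdeg : f.degree < q := by
      have := Lagrange.degree_interpolate_lt (fun t => v (some t)) (Set.injOn_id _) (s := univ)
      rwa [card_univ] at this
    have hv' : v = fun o => o.elim (v none) f.eval := by
      ext (_ | t)
      · rfl
      · exact (Lagrange.eval_interpolate_at_node (fun t => v (some t)) (Set.injOn_id _)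
          (mem_univ t)).symm
    rw [hv', checkMatrix_mulVec_elim hq (hnat hdeg)] at hv
    simp only [Matrix.cons_eq_zero_iff, neg_eq_zero, sub_eq_zero] at hv
    obtain ⟨h1, h2, h3, -⟩ := hv
    refine ⟨f, degree_lt_iff_coeff_zero _ _ |>.2 fun m hm => ?_, hv'.trans (by rw [h3])⟩
    obtain hm | rfl | rfl : q ≤ m ∨ m = q - 1 ∨ m = q - 2 := by omega
    · exact coeff_eq_zero_of_degree_lt (hdeg.trans_le (by exact_mod_cast hm))
    · exact h1
    · exact h2

variable [DecidableEq F]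

theorem checkMatrix_mulVec_single_some (t a : F) :
    checkMatrix F *ᵥ Pi.single (some t) a = ![a, t * a, t ^ 2 * a] := by
  ext i; fin_cases i <;> simp [checkMatrix]

theorem checkMatrix_mulVec_single_none (a : F) :
    checkMatrix F *ᵥ Pi.single none a = ![0, 0, a] := by
  ext i; fin_cases i <;> simp [checkMatrix]

variable [CharP F 2]

theorem mulVec_single_add_single_ne_nucleus {a : F} (ha : a ≠ 0) (i j : Option F) (α β : F) :
    checkMatrix F *ᵥ (Pi.single i α + Pi.single j β) ≠ ![0, a, 0] := by
  intro h
  rcases i with _ | s <;> rcases j with _ | t <;>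
    simp only [mulVec_add, checkMatrix_mulVec_single_some, checkMatrix_mulVec_single_none,
      vec3_add, vecCons_inj, and_true] at h <;>
    obtain ⟨h0, h1, h2⟩ := h
  · exact ha (by linear_combination -h1)
  · exact ha (by linear_combination -h1 + t * h0)
  · exact ha (by linear_combination -h1 + s * h0)
  · have hβ : β = α := by linear_combination h0 - α * CharTwo.two_eq_zero (R := F)
    rw [hβ] at h1 h2
    refine ha (pow_eq_zero_iff two_ne_zero |>.1 ?_)
    rw [← h1]
    linear_combination α * h2 + s * t * α ^ 2 * CharTwo.two_eq_zero (R := F)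

theorem exists_mulVec_single_add_single_eq (s : Fin 3 → F) (hs : ∀ a ≠ 0, s ≠ ![0, a, 0]) :
    ∃ i j α β, checkMatrix F *ᵥ (Pi.single i α + Pi.single j β) = s := by
  have hs_eta : ![s 0, s 1, s 2] = s := FinVec.etaExpand_eq s
  by_cases h0 : s 0 = 0
  swap
  · refine ⟨some (s 1 / s 0), none, s 0, s 2 + s 0 * (s 1 / s 0) ^ 2, ?_⟩
    rw [mulVec_add, checkMatrix_mulVec_single_some, checkMatrix_mulVec_single_none, vec3_add]
    refine (vec3_eq (add_zero _) ?_ ?_).trans hs_eta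
    · rw [add_zero, div_mul_cancel₀ _ h0]
    · linear_combination (s 0 * (s 1 / s 0) ^ 2) * CharTwo.two_eq_zero (R := F)
  by_cases h1 : s 1 = 0
  · refine ⟨none, none, s 2, 0, ?_⟩
    rw [mulVec_add, checkMatrix_mulVec_single_none, checkMatrix_mulVec_single_none, vec3_add]
    exact (vec3_eq (by rw [h0, add_zero]) (by rw [h1, add_zero]) (add_zero _)).trans hs_eta
  have h2 : s 2 ≠ 0 := fun h2 => hs (s 1) h1 (hs_eta.symm.trans (by rw [h0, h2]))
  refine ⟨some 0, some (s 2 / s 1), s 1 ^ 2 / s 2, s 1 ^ 2 / s 2, ?_⟩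
  rw [mulVec_add, checkMatrix_mulVec_single_some, checkMatrix_mulVec_single_some, vec3_add]
  refine (vec3_eq ?_ ?_ ?_).trans hs_eta
  · linear_combination (s 1 ^ 2 / s 2) * CharTwo.two_eq_zero (R := F) - h0
  · rw [zero_mul, zero_add]
    field_simp
  · rw [zero_pow two_ne_zero, zero_mul, zero_add]
    field_simp

theorem exists_hammingNorm_le_three (s : Fin 3 → F) :
    ∃ e, checkMatrix F *ᵥ e = s ∧ hammingNorm e ≤ 3 := by
  refine ⟨Pi.single (some 0) (s 0 + s 1) + Pi.single (some 1) (s 1) + Pi.single none (s 2 + s 1),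
    ?_, (hammingNorm_add_le _ _).trans
      (add_le_add (hammingNorm_single_add_single_le _ _ _ _) (hammingNorm_single_le _ _))⟩
  have hs_eta : ![s 0, s 1, s 2] = s := FinVec.etaExpand_eq s
  rw [mulVec_add, mulVec_add, checkMatrix_mulVec_single_some, checkMatrix_mulVec_single_some,
    checkMatrix_mulVec_single_none, vec3_add, vec3_add]
  refine (vec3_eq ?_ ?_ ?_).trans hs_eta
  · linear_combination s 1 * CharTwo.two_eq_zero (R := F)
  · ring
  · linear_combination s 1 * CharTwo.two_eq_zero (R := F)

theorem exists_hammingNorm_le_two_iff (s : Fin 3 → F) :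
    (∃ e, checkMatrix F *ᵥ e = s ∧ hammingNorm e ≤ 2) ↔ ∀ a ≠ 0, s ≠ ![0, a, 0] := by
  constructor
  · rintro ⟨e, rfl, he⟩ a ha
    obtain ⟨i, j, α, β, rfl⟩ := exists_eq_single_add_single_of_hammingNorm_le_two he
    exact mulVec_single_add_single_ne_nucleus ha i j α β
  · intro hs
    obtain ⟨i, j, α, β, h⟩ := exists_mulVec_single_add_single_eq s hs
    exact ⟨_, h, hammingNorm_single_add_single_le i j α β⟩

theorem forall_three_le_hammingDist_iff (hq : 4 ≤ Fintype.card F) (u : Option F → F) :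
    (∀ c ∈ code F, 3 ≤ hammingDist u c) ↔ ∃ a ≠ 0, checkMatrix F *ᵥ u = ![0, a, 0] := by
  calc (∀ c ∈ code F, 3 ≤ hammingDist u c)
      ↔ ¬∃ c, checkMatrix F *ᵥ c = 0 ∧ hammingDist u c ≤ 2 := by
        simp only [mem_code_iff hq, not_exists, not_and, not_le]; rfl
    _ ↔ ∃ a ≠ 0, checkMatrix F *ᵥ u = ![0, a, 0] := by
        rw [exists_hammingDist_le_iff_exists_mulVec_eq, exists_hammingNorm_le_two_iff]
        push Not; rfl

end DoublyExtendedRS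

/-- Let q be even and C the [q+1, q−2] Reed–Solomon code with
evaluation set PG(1,q) (coordinates indexed by `Option F`, `none` = ∞).  The
covering radius of C is 3, every deep hole u of C (word at distance 3 from C) has
projective syndrome (0:1:0) — the nucleus of the standard conic — and hence there
is exactly one equivalence class of deep holes (u ~ v iff v − a·u ∈ C, a ≠ 0). -/
theorem stmt_12 {F : Type*} [Field F] [Fintype F] [DecidableEq F]
    (heven : Even (Fintype.card F)) (hq : 4 ≤ Fintype.card F) :
    let q := Fintype.card F
    let C : Set (Option F → F) := {v | ∃ f : Polynomial F, f.degree < ((q - 2 : ℕ) : ℕ) ∧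
      v = fun o => o.elim (f.coeff (q - 3)) (fun t => f.eval t)}
    let H : Matrix (Fin 3) (Option F) F :=
      Matrix.of fun i o => o.elim (if (i : ℕ) = 2 then (1 : F) else 0) (fun t => t ^ (i : ℕ))
    -- the covering radius of C equals 3
    ((∀ u : Option F → F, ∃ c ∈ C, hammingDist u c ≤ 3) ∧
     (∃ u : Option F → F, ∀ c ∈ C, 3 ≤ hammingDist u c)) ∧
    -- every deep hole has projective syndrome (0:1:0)
    (∀ u : Option F → F, (∀ c ∈ C, 3 ≤ hammingDist u c) →
      ∃ a : F, a ≠ 0 ∧ H.mulVec u = fun (i : Fin 3) => if (i : ℕ) = 1 then a else 0) ∧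
    -- exactly one equivalence class of deep holes
    (∀ u v : Option F → F, (∀ c ∈ C, 3 ≤ hammingDist u c) →
      (∀ c ∈ C, 3 ≤ hammingDist v c) → ∃ a : F, a ≠ 0 ∧ v - a • u ∈ C) := by
  intro q C H
  have : CharP F 2 :=
    ringChar.of_eq (FiniteField.even_card_iff_char_two.2 (Nat.even_iff.1 heven))
  have hC (v : Option F → F) : v ∈ C ↔ H *ᵥ v = 0 := DoublyExtendedRS.mem_code_iff hq v
  have hdeep (u : Option F → F) :
      (∀ c ∈ C, 3 ≤ hammingDist u c) ↔ ∃ a ≠ 0, H *ᵥ u = ![0, a, 0] :=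
    DoublyExtendedRS.forall_three_le_hammingDist_iff hq u
  refine ⟨⟨fun u => ?_, ?_⟩, fun u hu => ?_, fun u v hu hv => ?_⟩
  · obtain ⟨c, hc, hd⟩ := (exists_hammingDist_le_iff_exists_mulVec_eq H u 3).2
      (DoublyExtendedRS.exists_hammingNorm_le_three (H *ᵥ u))
    exact ⟨c, (hC c).2 hc, hd⟩
  · obtain ⟨u, hu, -⟩ := DoublyExtendedRS.exists_hammingNorm_le_three (F := F) ![0, 1, 0]
    exact ⟨u, (hdeep u).2 ⟨1, one_ne_zero, hu⟩⟩
  · obtain ⟨a, ha, hu⟩ := (hdeep u).1 hu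
    refine ⟨a, ha, hu.trans ?_⟩
    ext i; fin_cases i <;> rfl
  · obtain ⟨a, ha, hu⟩ := (hdeep u).1 hu
    obtain ⟨b, hb, hv⟩ := (hdeep v).1 hv
    refine ⟨b / a, div_ne_zero hb ha, (hC _).2 ?_⟩
    rw [mulVec_sub, mulVec_smul, hu, hv]
    ext i; fin_cases i <;> simp [ha]
end
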